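/- Let A ∈ ℝ^{m×n}, x̄ ∈ ℝ^n with R(x̄) < ∞, and ȳ = |A x̄|². Assume: (H.1) R is proper, lower semicontinuous, convex, and even symmetric; (H.2) for every I ⊆ {1,…,m} with |I| ≥ m/2, Ker(A^I) ∩ D_R(x̄) = {0}; R is non-negative; and Ker(R_∞) ∩ Ker(A) = {0}. Let y_k = ȳ + ε_k with σ_k = ‖ε_k‖₂ → 0, and let λ_k > 0 satisfy λ_k → 0 and σ_k²/λ_k → 0. Then for any choice of minimizers x_k of F_{y_k,λ_k}, one has |A x_k| → |A x̄|, R(x_k) → R(x̄), and min(‖x_k − x̄‖₂, ‖x_k + x̄‖₂) → 0 as k → ∞. -/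

import Mathlib

open MeasureTheory ProbabilityTheory Filter
open scoped NNReal ENNReal BigOperators

noncomputable section

/-- The Euclidean (`ℓ²`) norm on `Fin n → ℝ`. -/
def enorm2 {n : ℕ} (x : Fin n → ℝ) : ℝ := Real.sqrt (∑ i, x i ^ 2)

/-- Matrix-vector multiplication for `A ∈ ℝ^{m×n}`. -/
def mulVec' {m n : ℕ} (A : Fin m → Fin n → ℝ) (x : Fin n → ℝ) : Fin m → ℝ :=
  fun i => ∑ j, A i j * x j

/-- The asymptotic (recession) function `R_∞(z) = liminf_{z'→z, t→∞} R(t z')/t`. -/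
def asympFun {n : ℕ} (R : (Fin n → ℝ) → EReal) (z : Fin n → ℝ) : EReal :=
  Filter.liminf (fun p : (Fin n → ℝ) × ℝ => R (p.2 • p.1) * ((p.2⁻¹ : ℝ) : EReal))
    ((nhds z) ×ˢ Filter.atTop)

/-- The noiseless feasible set `{x : |Ax| = √ȳ entrywise}`. -/
def feasSet {m n : ℕ} (A : Fin m → Fin n → ℝ) (ybar : Fin m → ℝ) : Set (Fin n → ℝ) :=
  {x | ∀ r, |mulVec' A x r| = Real.sqrt (ybar r)}

/-- Set of minimizers of `R` over `S`. -/
def argminOn {α β : Type*} [Preorder β] (R : α → β) (S : Set α) : Set α :=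
  {x ∈ S | ∀ z ∈ S, R x ≤ R z}

/-- Convexity for `EReal`-valued functions. -/
def ERealConvex {n : ℕ} (R : (Fin n → ℝ) → EReal) : Prop :=
  ∀ x y : Fin n → ℝ, ∀ a b : ℝ, 0 ≤ a → 0 ≤ b → a + b = 1 →
    R (a • x + b • y) ≤ (a : EReal) * R x + (b : EReal) * R y

/-- Descent cone of `R` at `x̄`. -/
def descentCone {n : ℕ} {β : Type*} [Preorder β] (R : (Fin n → ℝ) → β)
    (xbar : Fin n → ℝ) : Set (Fin n → ℝ) :=
  {z | ∃ t : ℝ, 0 < t ∧ R (xbar + t • z) ≤ R xbar}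

/-- Euclidean unit sphere of `ℝⁿ`. -/
def unitSphere (n : ℕ) : Set (Fin n → ℝ) := {x | enorm2 x = 1}

/-- The constant ν = (1/18)√(π/2). -/
def nu : ℝ := (1 / 18) * Real.sqrt (Real.pi / 2)

/-- Law of a random `m × n` matrix with i.i.d. `N(0, 1/m)` entries. -/
def gaussMatrix (m n : ℕ) : Measure (Fin m → Fin n → ℝ) :=
  Measure.pi fun _ => Measure.pi fun _ => gaussianReal 0 (m : ℝ≥0)⁻¹

/-- Standard Gaussian vector `N(0, Id_n)`. -/
def gaussVec (n : ℕ) : Measure (Fin n → ℝ) := Measure.pi fun _ => gaussianReal 0 1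

/-- Dot product. -/
def dot {n : ℕ} (x y : Fin n → ℝ) : ℝ := ∑ i, x i * y i

/-- Gaussian width of S. -/
def gaussianWidth {n : ℕ} (S : Set (Fin n → ℝ)) : ℝ :=
  ∫ z, sSup ((fun x => dot z x) '' S) ∂(gaussVec n)

/-- `‖A^I x‖₂` : ℓ² norm of the rows of `Ax` indexed by `I`. -/
def rowNorm {m n : ℕ} (A : Fin m → Fin n → ℝ) (I : Finset (Fin m)) (x : Fin n → ℝ) : ℝ :=
  Real.sqrt (∑ i ∈ I, (mulVec' A x i) ^ 2)

/-- Covering number `N(S, δ)` by Euclidean balls of radius `δ` centered in `S`. -/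
def coveringNumber {n : ℕ} (S : Set (Fin n → ℝ)) (δ : ℝ) : ℕ :=
  sInf {k : ℕ | ∃ T : Finset (Fin n → ℝ), T.card = k ∧ ↑T ⊆ S ∧
    S ⊆ ⋃ c ∈ T, {x | enorm2 (x - c) ≤ δ}}

/-- Constrained (Mozorov) feasible set `{x : ‖y − |Ax|²‖₂ ≤ ρ}`. -/
def feasConst {m n : ℕ} (A : Fin m → Fin n → ℝ) (y : Fin m → ℝ) (ρ : ℝ) :
    Set (Fin n → ℝ) :=
  {x | enorm2 (fun i => y i - (mulVec' A x i) ^ 2) ≤ ρ}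

/-- Penalized (Tikhonov) objective `F_{y,λ}(x) = ‖y − |Ax|²‖₂² + λ R(x)`. -/
def Fpen {m n : ℕ} (A : Fin m → Fin n → ℝ) (y : Fin m → ℝ) (lam : ℝ)
    (R : (Fin n → ℝ) → EReal) (x : Fin n → ℝ) : EReal :=
  ((enorm2 (fun i => y i - (mulVec' A x i) ^ 2) ^ 2 : ℝ) : EReal) + (lam : EReal) * R x

/-!
Comparing the objective at `x_k` with its value at `x̄` gives
`‖ȳ + ε_k - |A x_k|²‖² + λ_k R(x_k) ≤ σ_k² + λ_k R(x̄)`. Hence the residual tends to `0`, so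
`|A x_k| → |A x̄|`, and `R(x_k) ≤ σ_k²/λ_k + R(x̄)`, a bound tending to `R(x̄)`. The sequence is
bounded, since otherwise its normalized terms accumulate at a unit vector of
`Ker A ∩ Ker R_∞`. At a cluster point `x`, lower semicontinuity gives `R(x) ≤ R(x̄)` while
`|A x| = |A x̄|`; on a set `I` of at least `m/2` rows `A x = ± A x̄`, so `±x - x̄` lies in
`Ker A^I ∩ D_R(x̄) = {0}` (evenness of `R` handles the sign). So every subsequence has a further
subsequence converging to `±x̄` along which `R` converges to `R(x̄)`.
-/

open Set Bornology Topology

section Euclidean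

variable {m n : ℕ}

lemma enorm2_nonneg (x : Fin n → ℝ) : 0 ≤ enorm2 x := Real.sqrt_nonneg _

lemma abs_le_enorm2 (x : Fin n → ℝ) (i : Fin n) : |x i| ≤ enorm2 x := by
  rw [← Real.sqrt_sq_eq_abs]
  exact Real.sqrt_le_sqrt (Finset.single_le_sum (fun j _ => sq_nonneg (x j)) (Finset.mem_univ i))

@[fun_prop]
lemma continuous_enorm2 : Continuous (enorm2 (n := n)) := by
  unfold enorm2; fun_prop

lemma tendsto_zero_of_tendsto_enorm2 {ι : Type*} {l : Filter ι} {w : ι → Fin n → ℝ}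
    (h : Tendsto (fun k => enorm2 (w k)) l (𝓝 0)) : Tendsto w l (𝓝 0) :=
  tendsto_pi_nhds.2 fun i =>
    squeeze_zero_norm (fun _ => (Real.norm_eq_abs _).trans_le (abs_le_enorm2 _ i)) h

lemma mulVec'_eq_mulVec (A : Fin m → Fin n → ℝ) (x : Fin n → ℝ) :
    mulVec' A x = Matrix.mulVec (Matrix.of A) x := rfl

@[fun_prop]
lemma continuous_mulVec' (A : Fin m → Fin n → ℝ) : Continuous (mulVec' A) := by
  unfold mulVec'; fun_prop

lemma mulVec'_sub (A : Fin m → Fin n → ℝ) (x y : Fin n → ℝ) :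
    mulVec' A (x - y) = mulVec' A x - mulVec' A y := by
  simp only [mulVec'_eq_mulVec, Matrix.mulVec_sub]

lemma mulVec'_neg (A : Fin m → Fin n → ℝ) (x : Fin n → ℝ) : mulVec' A (-x) = -mulVec' A x := by
  simp only [mulVec'_eq_mulVec, Matrix.mulVec_neg]

lemma mulVec'_smul (A : Fin m → Fin n → ℝ) (c : ℝ) (x : Fin n → ℝ) :
    mulVec' A (c • x) = c • mulVec' A x := by
  simp only [mulVec'_eq_mulVec, Matrix.mulVec_smul]

lemma tendsto_abs_of_tendsto_enorm2_sq_sub_sq {ι : Type*} {l : Filter ι} {u : ι → Fin m → ℝ}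
    {v : Fin m → ℝ} {ε : ι → Fin m → ℝ} (hε : Tendsto (fun k => enorm2 (ε k)) l (𝓝 0))
    (hres : Tendsto (fun k => enorm2 (fun i => v i ^ 2 + ε k i - u k i ^ 2)) l (𝓝 0)) :
    Tendsto (fun k i => |u k i|) l (𝓝 fun i => |v i|) := by
  have hε' := tendsto_pi_nhds.1 (tendsto_zero_of_tendsto_enorm2 hε)
  have hres' := tendsto_pi_nhds.1 (tendsto_zero_of_tendsto_enorm2 hres)
  refine tendsto_pi_nhds.2 fun i => ?_
  have hsq : Tendsto (fun k => u k i ^ 2) l (𝓝 (v i ^ 2)) := by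
    simpa using (((hε' i).sub (hres' i)).const_add (v i ^ 2)).congr fun k => by ring
  simpa only [Real.sqrt_sq_eq_abs] using hsq.sqrt

end Euclidean

section Identifiability

variable {m n : ℕ} {A : Fin m → Fin n → ℝ} {xbar : Fin n → ℝ}

lemma exists_half_card_eq_or_eq_neg (a b : Fin m → ℝ) (h : ∀ i, |a i| = |b i|) :
    ∃ I : Finset (Fin m), (m : ℝ) / 2 ≤ I.card ∧
      ((∀ i ∈ I, a i = b i) ∨ ∀ i ∈ I, a i = -b i) := by
  classical
  set I := Finset.univ.filter fun i => a i = b i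
  set J := Finset.univ.filter fun i => a i = -b i
  have hcover : (m : ℝ) ≤ I.card + J.card := by
    have hsub : Finset.univ ⊆ I ∪ J := fun i _ => by simpa [I, J] using abs_eq_abs.1 (h i)
    have hcard : m ≤ I.card + J.card := by
      simpa using (Finset.card_le_card hsub).trans (Finset.card_union_le I J)
    exact_mod_cast hcard
  obtain hI | hJ := le_or_gt ((m : ℝ) / 2) I.card
  · exact ⟨I, hI, .inl fun i hi => (Finset.mem_filter.1 hi).2⟩
  · exact ⟨J, by linarith, .inr fun i hi => (Finset.mem_filter.1 hi).2⟩

variable {β : Type*} [Preorder β] {R : (Fin n → ℝ) → β}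

lemma eq_of_mulVec'_eqOn_of_le
    (hH2 : ∀ I : Finset (Fin m), (m : ℝ) / 2 ≤ I.card →
      {z : Fin n → ℝ | ∀ i ∈ I, mulVec' A z i = 0} ∩ descentCone R xbar = {0})
    {I : Finset (Fin m)} (hI : (m : ℝ) / 2 ≤ I.card) {x : Fin n → ℝ}
    (hA : ∀ i ∈ I, mulVec' A x i = mulVec' A xbar i) (hR : R x ≤ R xbar) : x = xbar := by
  have hmem : x - xbar ∈ {z | ∀ i ∈ I, mulVec' A z i = 0} ∩ descentCone R xbar :=
    ⟨fun i hi => by rw [mulVec'_sub, Pi.sub_apply, hA i hi, sub_self],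
      1, one_pos, by simpa using hR⟩
  rw [hH2 I hI] at hmem
  exact sub_eq_zero.1 hmem

lemma eq_or_eq_neg_of_abs_mulVec'_eq (hReven : ∀ x, R (-x) = R x)
    (hH2 : ∀ I : Finset (Fin m), (m : ℝ) / 2 ≤ I.card →
      {z : Fin n → ℝ | ∀ i ∈ I, mulVec' A z i = 0} ∩ descentCone R xbar = {0})
    {x : Fin n → ℝ} (habs : ∀ i, |mulVec' A x i| = |mulVec' A xbar i|) (hR : R x ≤ R xbar) :
    x = xbar ∨ x = -xbar := by
  obtain ⟨I, hI, hsame | hopp⟩ := exists_half_card_eq_or_eq_neg _ _ habs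
  · exact .inl (eq_of_mulVec'_eqOn_of_le hH2 hI hsame hR)
  · refine .inr (neg_eq_iff_eq_neg.1 (eq_of_mulVec'_eqOn_of_le hH2 hI (fun i hi => ?_)
      (by rwa [hReven])))
    rw [mulVec'_neg, Pi.neg_apply, hopp i hi, neg_neg]

end Identifiability

section Asymptotic

variable {m n : ℕ} {R : (Fin n → ℝ) → EReal}

lemma asympFun_nonneg (hR : ∀ x, 0 ≤ R x) (z : Fin n → ℝ) : 0 ≤ asympFun R z :=
  le_liminf_of_le (by isBoundedDefault) <| ((eventually_ge_atTop 0).prod_inr _).mono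
    fun _ hp => mul_nonneg (hR _) (EReal.coe_nonneg.2 (inv_nonneg.2 hp))

lemma asympFun_le_liminf {z : ℕ → Fin n → ℝ} {t : ℕ → ℝ} {z₀ : Fin n → ℝ}
    (hz : Tendsto z atTop (𝓝 z₀)) (ht : Tendsto t atTop atTop) :
    asympFun R z₀ ≤ liminf (fun j => R (t j • z j) * (((t j)⁻¹ : ℝ) : EReal)) atTop :=
  liminf_le_liminf_of_le (hz.prodMk ht)

lemma exists_tendsto_normalize_of_not_isBounded {E : Type*} [NormedAddCommGroup E]
    [NormedSpace ℝ E] [ProperSpace E] {x : ℕ → E} (hx : ¬IsBounded (range x)) :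
    ∃ φ : ℕ → ℕ, ∃ z : E, ‖z‖ = 1 ∧ Tendsto (fun j => ‖x (φ j)‖) atTop atTop ∧
      Tendsto (fun j => ‖x (φ j)‖⁻¹ • x (φ j)) atTop (𝓝 z) := by
  have hlarge : ∀ C : ℝ, ∃ k, C < ‖x k‖ := by
    simpa [isBounded_iff_forall_norm_le] using hx
  choose ψ hψ using fun j : ℕ => hlarge j
  have hsphere (j : ℕ) : ‖x (ψ j)‖⁻¹ • x (ψ j) ∈ Metric.sphere (0 : E) 1 := by
    have hpos : 0 < ‖x (ψ j)‖ := (Nat.cast_nonneg j).trans_lt (hψ j)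
    simp [norm_smul, hpos.ne']
  obtain ⟨z, hz, σ, hσ, hlim⟩ := (isCompact_sphere (0 : E) 1).tendsto_subseq hsphere
  refine ⟨ψ ∘ σ, z, by simpa using hz, ?_, hlim⟩
  exact tendsto_atTop_mono (fun j => (hψ (σ j)).le)
    (tendsto_natCast_atTop_atTop.comp hσ.tendsto_atTop)

lemma isBounded_range_of_asympFun_ker (hRnonneg : ∀ x, 0 ≤ R x) {A : Fin m → Fin n → ℝ}
    (hker : {z : Fin n → ℝ | asympFun R z = 0} ∩ {z | mulVec' A z = 0} = {0})
    {x : ℕ → Fin n → ℝ} (hA : ∀ i, BddAbove (range fun k => |mulVec' A (x k) i|)) {D : ℝ}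
    (hR : ∀ k, R (x k) ≤ D) : IsBounded (range x) := by
  by_contra hx
  obtain ⟨φ, z, hz1, ht, hz⟩ := exists_tendsto_normalize_of_not_isBounded hx
  have htinv := ht.inv_tendsto_atTop
  have hpos : ∀ᶠ j in atTop, 0 < ‖x (φ j)‖ := ht.eventually_gt_atTop 0
  have hAz : mulVec' A z = 0 := by
    funext i
    obtain ⟨Q, hQ⟩ := hA i
    refine tendsto_nhds_unique
      ((((continuous_apply i).comp (continuous_mulVec' A)).tendsto z).comp hz) ?_
    refine squeeze_zero_norm (fun j => ?_) (by simpa using htinv.mul_const Q)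
    simp only [Function.comp_apply, mulVec'_smul, Pi.smul_apply, smul_eq_mul, norm_mul,
      norm_inv, Real.norm_eq_abs, abs_norm]
    exact mul_le_mul_of_nonneg_left (hQ ⟨_, rfl⟩) (by positivity)
  have hRz : asympFun R z ≤ 0 := by
    refine (asympFun_le_liminf hz ht).trans ?_
    have hD : Tendsto (fun j => ((D * ‖x (φ j)‖⁻¹ : ℝ) : EReal)) atTop (𝓝 0) := by
      simpa using EReal.tendsto_coe.2 (htinv.const_mul D)
    refine (liminf_le_liminf (hpos.mono fun j hj => ?_)).trans hD.liminf_eq.le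
    rw [smul_inv_smul₀ hj.ne', EReal.coe_mul]
    exact mul_le_mul_of_nonneg_right (hR _) (EReal.coe_nonneg.2 (inv_nonneg.2 hj.le))
  have hz0 : z ∈ ({0} : Set (Fin n → ℝ)) :=
    hker ▸ ⟨le_antisymm hRz (asympFun_nonneg hRnonneg z), hAz⟩
  simp_all

end Asymptotic

lemma tendsto_of_forall_tendsto_subseq {X Y : Type*} [PseudoMetricSpace X] [ProperSpace X]
    [TopologicalSpace Y] {x : ℕ → X} (hx : IsBounded (range x)) {f : ℕ → Y} {y : Y}
    (h : ∀ φ : ℕ → ℕ, Tendsto φ atTop atTop → ∀ a, Tendsto (x ∘ φ) atTop (𝓝 a) →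
      Tendsto (f ∘ φ) atTop (𝓝 y)) :
    Tendsto f atTop (𝓝 y) := by
  refine tendsto_of_subseq_tendsto fun ns hns => ?_
  obtain ⟨a, -, ms, hms, hlim⟩ := tendsto_subseq_of_bounded hx fun k => mem_range_self (ns k)
  exact ⟨ms, h (ns ∘ ms) (hns.comp hms.tendsto_atTop) a hlim⟩

section Tikhonov

variable {m n : ℕ} {A : Fin m → Fin n → ℝ} {R : (Fin n → ℝ) → EReal}

lemma exists_coe_of_Fpen_le (hRbot : ∀ x, R x ≠ ⊥) {y : Fin m → ℝ} {lam : ℝ} (hlam : 0 < lam)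
    {x x' : Fin n → ℝ} {r : ℝ} (hr : R x' = r) (h : Fpen A y lam R x ≤ Fpen A y lam R x') :
    ∃ ρ : ℝ, R x = ρ ∧ enorm2 (fun i => y i - mulVec' A x i ^ 2) ^ 2 + lam * ρ ≤
      enorm2 (fun i => y i - mulVec' A x' i ^ 2) ^ 2 + lam * r := by
  unfold Fpen at h
  rw [hr, ← EReal.coe_mul, ← EReal.coe_add] at h
  have htop : R x ≠ ⊤ := by
    intro htop
    rw [htop, EReal.mul_top_of_pos (EReal.coe_pos.2 hlam), EReal.coe_add_top] at h
    exact EReal.coe_ne_top _ (top_le_iff.1 h)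
  refine ⟨(R x).toReal, (EReal.coe_toReal htop (hRbot x)).symm, ?_⟩
  rwa [← EReal.coe_toReal htop (hRbot x), ← EReal.coe_mul, ← EReal.coe_add,
    EReal.coe_le_coe_iff] at h

lemma tendsto_zero_of_sq_add_le_sq_add {ι : Type*} {l : Filter ι} {e σ lam ρ : ι → ℝ} {r : ℝ}
    (he : ∀ k, 0 ≤ e k) (hpen : ∀ k, 0 ≤ lam k * ρ k)
    (h : ∀ k, e k ^ 2 + lam k * ρ k ≤ σ k ^ 2 + lam k * r)
    (hσ : Tendsto σ l (𝓝 0)) (hlam : Tendsto lam l (𝓝 0)) : Tendsto e l (𝓝 0) := by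
  have hsq : Tendsto (fun k => e k ^ 2) l (𝓝 0) :=
    squeeze_zero (g := fun k => σ k ^ 2 + lam k * r) (fun k => sq_nonneg _)
      (fun k => by linarith [h k, hpen k]) (by simpa using (hσ.pow 2).add (hlam.mul_const r))
  simpa [Real.sqrt_sq (he _)] using hsq.sqrt

lemma eq_or_eq_neg_and_tendsto_of_tendsto {xbar : Fin n → ℝ} (hRlsc : LowerSemicontinuous R)
    (hReven : ∀ x, R (-x) = R x)
    (hH2 : ∀ I : Finset (Fin m), (m : ℝ) / 2 ≤ I.card →
      {z : Fin n → ℝ | ∀ i ∈ I, mulVec' A z i = 0} ∩ descentCone R xbar = {0})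
    {x : ℕ → Fin n → ℝ} {a : Fin n → ℝ} (hx : Tendsto x atTop (𝓝 a))
    (habs : Tendsto (fun j i => |mulVec' A (x j) i|) atTop (𝓝 fun i => |mulVec' A xbar i|))
    {b : ℕ → EReal}
    (hRb : ∀ j, R (x j) ≤ b j) (hb : Tendsto b atTop (𝓝 (R xbar))) :
    (a = xbar ∨ a = -xbar) ∧ Tendsto (fun j => R (x j)) atTop (𝓝 (R xbar)) := by
  have hlimsup : limsup (fun j => R (x j)) atTop ≤ R xbar :=
    (limsup_le_limsup (.of_forall hRb)).trans hb.limsup_eq.le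
  have hliminf : R a ≤ liminf (fun j => R (x j)) atTop :=
    (hRlsc.le_liminf a).trans (liminf_le_liminf_of_le hx)
  have habs_a : (fun i => |mulVec' A a i|) = fun i => |mulVec' A xbar i| :=
    tendsto_nhds_unique (((by fun_prop : Continuous fun x i => |mulVec' A x i|).tendsto a).comp hx)
      habs
  have ha := eq_or_eq_neg_of_abs_mulVec'_eq hReven hH2 (congrFun habs_a)
    (hliminf.trans (le_trans liminf_le_limsup hlimsup))
  refine ⟨ha, tendsto_of_le_liminf_of_limsup_le ?_ hlimsup⟩
  obtain rfl | rfl := ha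
  exacts [hliminf, by rwa [hReven] at hliminf]

end Tikhonov

theorem statement15_general {m n : ℕ} (A : Fin m → Fin n → ℝ) (xbar : Fin n → ℝ)
    (R : (Fin n → ℝ) → EReal)
    (hfin : R xbar ≠ ⊤)
    (hRbot : ∀ x, R x ≠ ⊥)
    (hRlsc : LowerSemicontinuous R)
    (hReven : ∀ x, R (-x) = R x)
    (hH2 : ∀ I : Finset (Fin m), (m : ℝ) / 2 ≤ I.card →
      {z : Fin n → ℝ | ∀ i ∈ I, mulVec' A z i = 0} ∩ descentCone R xbar = {0})
    (hRnonneg : ∀ x, 0 ≤ R x)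
    (hker : {z : Fin n → ℝ | asympFun R z = 0} ∩ {z | mulVec' A z = 0} = {0})
    (εk : ℕ → Fin m → ℝ) (lamk : ℕ → ℝ)
    (hlampos : ∀ k, 0 < lamk k)
    (hσ : Filter.Tendsto (fun k => enorm2 (εk k)) Filter.atTop (nhds 0))
    (hlam : Filter.Tendsto lamk Filter.atTop (nhds 0))
    (hratio : Filter.Tendsto (fun k => enorm2 (εk k) ^ 2 / lamk k) Filter.atTop (nhds 0))
    (xk : ℕ → Fin n → ℝ)
    (hxk : ∀ k, xk k ∈ argminOn
      (Fpen A (fun i => (mulVec' A xbar i) ^ 2 + εk k i) (lamk k) R) Set.univ) :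
    Filter.Tendsto (fun k => fun i => |mulVec' A (xk k) i|) Filter.atTop
        (nhds fun i => |mulVec' A xbar i|) ∧
    Filter.Tendsto (fun k => R (xk k)) Filter.atTop (nhds (R xbar)) ∧
    Filter.Tendsto (fun k => min (enorm2 (xk k - xbar)) (enorm2 (xk k + xbar)))
        Filter.atTop (nhds 0) := by
  obtain ⟨r, hr⟩ : ∃ r : ℝ, R xbar = r := ⟨_, (EReal.coe_toReal hfin (hRbot xbar)).symm⟩
  choose ρ hρ hmin using fun k =>
    exists_coe_of_Fpen_le hRbot (hlampos k) hr ((hxk k).2 xbar (mem_univ _))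
  simp only [add_sub_cancel_left] at hmin
  have hpen k : 0 ≤ lamk k * ρ k :=
    mul_nonneg (hlampos k).le (EReal.coe_nonneg.1 (hρ k ▸ hRnonneg _))
  have habs : Tendsto (fun k i => |mulVec' A (xk k) i|) atTop (𝓝 fun i => |mulVec' A xbar i|) :=
    tendsto_abs_of_tendsto_enorm2_sq_sub_sq hσ
      (tendsto_zero_of_sq_add_le_sq_add (fun _ => enorm2_nonneg _) hpen hmin hσ hlam)
  have hb : Tendsto (fun k => enorm2 (εk k) ^ 2 / lamk k + r) atTop (𝓝 r) := by
    simpa using hratio.add_const r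
  have hRb k : R (xk k) ≤ ((enorm2 (εk k) ^ 2 / lamk k + r : ℝ) : EReal) := by
    rw [hρ, EReal.coe_le_coe_iff, div_add' _ _ _ (hlampos k).ne', le_div_iff₀ (hlampos k)]
    linarith [(le_add_of_nonneg_left (sq_nonneg _)).trans (hmin k)]
  obtain ⟨D, hD⟩ := hb.bddAbove_range
  have hbdd := isBounded_range_of_asympFun_ker hRnonneg hker
    (fun i => (tendsto_pi_nhds.1 habs i).bddAbove_range)
    (fun k => (hRb k).trans (EReal.coe_le_coe_iff.2 (hD (mem_range_self k))))
  have hcluster (φ : ℕ → ℕ) (hφ : Tendsto φ atTop atTop) (a : Fin n → ℝ)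
      (ha : Tendsto (xk ∘ φ) atTop (𝓝 a)) :=
    eq_or_eq_neg_and_tendsto_of_tendsto hRlsc hReven hH2 ha (habs.comp hφ) (fun j => hRb (φ j))
      (hr ▸ (EReal.tendsto_coe.2 hb).comp hφ)
  refine ⟨habs, tendsto_of_forall_tendsto_subseq hbdd fun φ hφ a ha => (hcluster φ hφ a ha).2,
    tendsto_of_forall_tendsto_subseq hbdd fun φ hφ a ha => ?_⟩
  have hdist : Continuous fun x => min (enorm2 (x - xbar)) (enorm2 (x + xbar)) := by fun_prop
  have hzero : min (enorm2 (a - xbar)) (enorm2 (a + xbar)) = 0 := by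
    obtain rfl | rfl := (hcluster φ hφ a ha).1 <;> simp [enorm2]
  exact hzero ▸ (hdist.tendsto a).comp ha

/-- Γ-convergence of the penalized (Tikhonov) formulation as the noise
and the regularization parameter vanish. -/
theorem statement15 {m n : ℕ} (A : Fin m → Fin n → ℝ) (xbar : Fin n → ℝ)
    (R : (Fin n → ℝ) → EReal)
    (hfin : R xbar ≠ ⊤)
    (hRbot : ∀ x, R x ≠ ⊥)
    (hRproper : ∃ x, R x ≠ ⊤)
    (hRlsc : LowerSemicontinuous R)
    (hRconv : ERealConvex R)
    (hReven : ∀ x, R (-x) = R x)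
    (hH2 : ∀ I : Finset (Fin m), (m : ℝ) / 2 ≤ I.card →
      {z : Fin n → ℝ | ∀ i ∈ I, mulVec' A z i = 0} ∩ descentCone R xbar = {0})
    (hRnonneg : ∀ x, 0 ≤ R x)
    (hker : {z : Fin n → ℝ | asympFun R z = 0} ∩ {z | mulVec' A z = 0} = {0})
    (εk : ℕ → Fin m → ℝ) (lamk : ℕ → ℝ)
    (hlampos : ∀ k, 0 < lamk k)
    (hσ : Filter.Tendsto (fun k => enorm2 (εk k)) Filter.atTop (nhds 0))
    (hlam : Filter.Tendsto lamk Filter.atTop (nhds 0))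
    (hratio : Filter.Tendsto (fun k => enorm2 (εk k) ^ 2 / lamk k) Filter.atTop (nhds 0))
    (xk : ℕ → Fin n → ℝ)
    (hxk : ∀ k, xk k ∈ argminOn
      (Fpen A (fun i => (mulVec' A xbar i) ^ 2 + εk k i) (lamk k) R) Set.univ) :
    Filter.Tendsto (fun k => fun i => |mulVec' A (xk k) i|) Filter.atTop
        (nhds fun i => |mulVec' A xbar i|) ∧
    Filter.Tendsto (fun k => R (xk k)) Filter.atTop (nhds (R xbar)) ∧
    Filter.Tendsto (fun k => min (enorm2 (xk k - xbar)) (enorm2 (xk k + xbar)))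
        Filter.atTop (nhds 0) :=
  statement15_general A xbar R hfin hRbot hRlsc hReven hH2 hRnonneg hker εk lamk hlampos hσ hlam
    hratio xk hxk
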